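/- arXiv:2004.14658 — 3 statements merged into one kernel-verified Lean document; each statement's English description precedes it below -/
import Mathlib

section
/- Let ρ and σ be density matrices on an n-dimensional Hilbert space, with eigenvalues λ₁≤λ₂≤…≤λₙ of ρ (ascending) and μ₁≥μ₂≥…≥μₙ of σ (descending), including zeros. Then the quantum trace distance satisfies T(ρ,σ) ≤ ½ Σᵢ |λᵢ − μᵢ|, i.e. it is bounded by the classical (Kolmogorov) trace distance between the ascending eigenvalue vector of ρ and the descending eigenvalue vector of σ. -/
open Matrix Kronecker
open scoped ComplexOrder

/-- The positive semidefinite square root of a positive semidefinite matrix (the definition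
of `Matrix.PosSemidef.sqrt` in the older Mathlib, since removed). -/
noncomputable def Matrix.PosSemidef.sqrt {n 𝕜 : Type*} [Fintype n] [RCLike 𝕜] [DecidableEq n]
    {A : Matrix n n 𝕜} (hA : A.PosSemidef) : Matrix n n 𝕜 :=
  hA.1.eigenvectorUnitary.1 * diagonal ((↑) ∘ (√·) ∘ hA.1.eigenvalues) *
  (star hA.1.eigenvectorUnitary : Matrix n n 𝕜)

/-- Trace distance `T(ρ,σ) = ½ Tr √((ρ−σ)†(ρ−σ))`. -/
noncomputable def traceDist {n : ℕ} (ρ σ : Matrix (Fin n) (Fin n) ℂ) : ℝ :=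
  (1/2) * ((Matrix.posSemidef_conjTranspose_mul_self (ρ - σ)).sqrt).trace.re

/-!
Let `P` be the spectral projection of `ρ - σ` onto its positive eigenspaces and `k` its rank.
Since `tr ρ = tr σ`, `T(ρ, σ) = tr P(ρ - σ) = tr Pρ - tr Pσ`. In an eigenbasis `(vⱼ)` of a
Hermitian `B`, `tr PB = ∑ⱼ νⱼ ⟪vⱼ, P vⱼ⟫` with weights in `[0, 1]` of total mass `k`, so (Ky Fan)
`tr Pρ` is at most the sum of the `k` largest eigenvalues of `ρ` and `tr Pσ` at least the sum of
the `k` smallest eigenvalues of `σ`. With `λ` ascending and `μ` descending both sit at the last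
`k` indices `S`, whence `T ≤ ∑_{i ∈ S} (λᵢ - μᵢ) ≤ ∑ᵢ (λᵢ - μᵢ)⁺ = ½ ∑ᵢ |λᵢ - μᵢ|`.
-/

open Finset
open scoped MatrixOrder

lemma sum_abs_eq_two_mul_sum_posPart {ι : Type*} [Fintype ι] {f : ι → ℝ} (hf : ∑ i, f i = 0) :
    ∑ i, |f i| = 2 * ∑ i, (f i)⁺ := by
  have h : ∀ i, |f i| = 2 * (f i)⁺ - f i := fun i => by
    linarith [posPart_add_negPart (f i), posPart_sub_negPart (f i)]
  rw [sum_congr rfl fun i _ => h i, sum_sub_distrib, hf, mul_sum, sub_zero]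

section Weights

variable {ι : Type*} [Fintype ι] {f t : ι → ℝ} {S : Finset ι}

theorem sum_mul_le_sum_of_forall_notMem_le (ht₀ : ∀ i, 0 ≤ t i) (ht₁ : ∀ i, t i ≤ 1)
    (ht : ∑ i, t i = #S) (hf : ∀ i ∈ S, ∀ j ∉ S, f j ≤ f i) :
    ∑ i, f i * t i ≤ ∑ i ∈ S, f i := by
  classical
  rcases S.eq_empty_or_nonempty with rfl | hS
  · have : ∀ i, t i = 0 := by simpa [sum_eq_zero_iff_of_nonneg fun i _ => ht₀ i] using ht
    simp [this]
  set c := S.inf' hS f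
  have hterm : ∀ i, (f i - c) * t i ≤ if i ∈ S then f i - c else 0 := by
    intro i
    split_ifs with hi
    · exact mul_le_of_le_one_right (sub_nonneg.2 (inf'_le _ hi)) (ht₁ i)
    · exact mul_nonpos_of_nonpos_of_nonneg
        (sub_nonpos.2 (le_inf' _ _ fun j hj => hf j hj i hi)) (ht₀ i)
  calc ∑ i, f i * t i = ∑ i, (f i - c) * t i + c * ∑ i, t i := by
        rw [mul_sum, ← sum_add_distrib]; ring_nf
    _ ≤ ∑ i, (if i ∈ S then f i - c else 0) + c * #S := by rw [ht]; gcongr with i; exact hterm i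
    _ = ∑ i ∈ S, f i := by
        rw [sum_ite_mem, univ_inter, sum_sub_distrib, sum_const, nsmul_eq_mul]; ring

theorem sum_le_sum_mul_of_forall_notMem_le (ht₀ : ∀ i, 0 ≤ t i) (ht₁ : ∀ i, t i ≤ 1)
    (ht : ∑ i, t i = #S) (hf : ∀ i ∈ S, ∀ j ∉ S, f i ≤ f j) :
    ∑ i ∈ S, f i ≤ ∑ i, f i * t i := by
  have := sum_mul_le_sum_of_forall_notMem_le (f := fun i => -f i) ht₀ ht₁ ht
    fun i hi j hj => neg_le_neg (hf i hi j hj)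
  simpa [sum_neg_distrib] using this

end Weights

section UpperSet

variable {α β : Type*} [LinearOrder α] [Preorder β] {s : Set α} {f : α → β} {i j : α}

lemma IsUpperSet.apply_le_of_monotone (hs : IsUpperSet s) (hf : Monotone f) (hi : i ∈ s)
    (hj : j ∉ s) : f j ≤ f i :=
  hf (not_le.mp fun hij => hj (hs hij hi)).le

lemma IsUpperSet.apply_le_of_antitone (hs : IsUpperSet s) (hf : Antitone f) (hi : i ∈ s)
    (hj : j ∉ s) : f i ≤ f j :=
  hf (not_le.mp fun hij => hj (hs hij hi)).le

end UpperSet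

lemma Fin.exists_isUpperSet_card {n k : ℕ} (hk : k ≤ n) :
    ∃ S : Finset (Fin n), IsUpperSet (S : Set (Fin n)) ∧ #S = k := by
  refine ⟨univ.filter fun i : Fin n => ¬ (i : ℕ) < n - k, fun i j hij hi => ?_, ?_⟩
  · simp only [coe_filter, mem_univ, true_and, not_lt, Set.mem_ofPred] at hi ⊢
    exact hi.trans hij
  · have := card_filter_add_card_filter_not (s := (univ : Finset (Fin n)))
      (fun i : Fin n => (i : ℕ) < n - k)
    rw [Fin.card_filter_val_lt, card_univ, Fintype.card_fin] at this
    omega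

namespace Matrix

section Diag

variable {m 𝕜 : Type*} [RCLike 𝕜] {M : Matrix m m 𝕜}

lemma re_diag_nonneg (hM : 0 ≤ M) (j : m) : 0 ≤ RCLike.re (M j j) :=
  (RCLike.nonneg_iff.mp (nonneg_iff_posSemidef.mp hM).diag_nonneg).1

lemma re_diag_le_one [DecidableEq m] (hM : M ≤ 1) (j : m) : RCLike.re (M j j) ≤ 1 := by
  have h := re_diag_nonneg (sub_nonneg.mpr hM) j
  rwa [sub_apply, one_apply_eq, map_sub, RCLike.one_re, sub_nonneg] at h

end Diag

variable {m 𝕜 : Type*} [Fintype m] [DecidableEq m] [RCLike 𝕜]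

lemma PosSemidef.sqrt_eq_cfcSqrt {A : Matrix m m 𝕜} (hA : A.PosSemidef) :
    hA.sqrt = CFC.sqrt A := by
  rw [CFC.sqrt_eq_cfc, cfc_nnreal_eq_real _ A, hA.1.cfc_eq, IsHermitian.cfc,
    Unitary.conjStarAlgAut_apply, PosSemidef.sqrt]
  congr 3
  funext i
  simp [hA.eigenvalues_nonneg i]

lemma sqrt_posSemidef_conjTranspose_mul_self (A : Matrix m m 𝕜) :
    (posSemidef_conjTranspose_mul_self A).sqrt = CFC.abs A := by
  rw [PosSemidef.sqrt_eq_cfcSqrt, CFC.abs, star_eq_conjTranspose]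

lemma IsHermitian.trace_cfc {A : Matrix m m 𝕜} (hA : A.IsHermitian) (f : ℝ → ℝ) :
    (cfc f A).trace = ∑ i, (f (hA.eigenvalues i) : 𝕜) := by
  rw [hA.cfc_eq, IsHermitian.cfc, Unitary.conjStarAlgAut_apply, trace_mul_cycle,
    UnitaryGroup.star_mul_self, one_mul, trace_diagonal]
  rfl

lemma IsHermitian.trace_abs {A : Matrix m m 𝕜} (hA : A.IsHermitian) :
    (CFC.abs A).trace = ∑ i, ((|hA.eigenvalues i| : ℝ) : 𝕜) := by
  rw [CFC.abs_eq_cfc_norm A, hA.trace_cfc]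
  rfl

lemma IsHermitian.sum_eigenvalues_comp {B : Matrix m m 𝕜} (hB : B.IsHermitian) {f : m → ℝ}
    (hf : ∃ e : Equiv.Perm m, f = hB.eigenvalues ∘ e) : ∑ i, f i = RCLike.re B.trace := by
  obtain ⟨e, rfl⟩ := hf
  rw [Function.comp_def, Equiv.sum_comp e, hB.trace_eq_sum_eigenvalues, map_sum]
  simp

noncomputable def posProj (A : Matrix m m 𝕜) : Matrix m m 𝕜 :=
  cfc (fun x : ℝ => if 0 < x then 1 else 0) A

lemma posProj_nonneg (A : Matrix m m 𝕜) : 0 ≤ posProj A :=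
  cfc_nonneg fun x _ => by split_ifs <;> norm_num

lemma posProj_le_one (A : Matrix m m 𝕜) : posProj A ≤ 1 :=
  cfc_le_one _ _ fun x _ => by split_ifs <;> norm_num

lemma IsHermitian.trace_posProj {A : Matrix m m 𝕜} (hA : A.IsHermitian) :
    (posProj A).trace = #{i | 0 < hA.eigenvalues i} := by
  rw [posProj, hA.trace_cfc]
  simp [sum_boole]

lemma IsHermitian.re_trace_posProj_mul_self {A : Matrix m m 𝕜} (hA : A.IsHermitian) :
    RCLike.re (posProj A * A).trace = ∑ i, (hA.eigenvalues i)⁺ := by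
  have hfin : (spectrum ℝ A).Finite := hA.spectrum_real_eq_range_eigenvalues ▸ Set.finite_range _
  nth_rewrite 2 [← cfc_id' ℝ A]
  rw [posProj, ← cfc_mul _ _ A (hfin.continuousOn _) (hfin.continuousOn _), hA.trace_cfc,
    map_sum]
  refine sum_congr rfl fun i _ => ?_
  rw [RCLike.ofReal_re]
  split_ifs with h
  · rw [one_mul, posPart_eq_self.mpr h.le]
  · rw [zero_mul, posPart_eq_zero.mpr (not_lt.mp h)]

lemma IsHermitian.trace_mul_eq_sum {B : Matrix m m 𝕜} (hB : B.IsHermitian) (P : Matrix m m 𝕜) :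
    (P * B).trace = ∑ j, (star (hB.eigenvectorUnitary : Matrix m m 𝕜) * P *
      hB.eigenvectorUnitary) j j * hB.eigenvalues j := by
  conv_lhs => rw [hB.spectral_theorem, Unitary.conjStarAlgAut_apply, ← mul_assoc, ← mul_assoc,
    trace_mul_cycle, ← mul_assoc]
  simp [trace, mul_diagonal]

lemma IsHermitian.exists_re_trace_mul_eq_sum {B : Matrix m m 𝕜} (hB : B.IsHermitian)
    {P : Matrix m m 𝕜} (hP₀ : 0 ≤ P) (hP₁ : P ≤ 1) :
    ∃ t : m → ℝ, (∀ j, 0 ≤ t j) ∧ (∀ j, t j ≤ 1) ∧ ∑ j, t j = RCLike.re P.trace ∧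
      RCLike.re (P * B).trace = ∑ j, hB.eigenvalues j * t j := by
  set U := (hB.eigenvectorUnitary : Matrix m m 𝕜)
  have hU : star U * U = 1 := UnitaryGroup.star_mul_self _
  refine ⟨fun j => RCLike.re ((star U * P * U) j j),
    fun j => re_diag_nonneg (star_left_conjugate_nonneg hP₀ U) j,
    fun j => re_diag_le_one ?_ j, ?_, ?_⟩
  · simpa [hU] using star_left_conjugate_le_conjugate hP₁ U
  · rw [← map_sum]
    change RCLike.re (star U * P * U).trace = _
    rw [trace_mul_cycle, mem_unitaryGroup_iff.mp hB.eigenvectorUnitary.2, one_mul]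
  · rw [hB.trace_mul_eq_sum, map_sum]
    refine sum_congr rfl fun j _ => ?_
    rw [RCLike.re_mul_ofReal, mul_comm]

lemma IsHermitian.re_trace_mul_le_sum {B P : Matrix m m 𝕜} (hB : B.IsHermitian) (hP₀ : 0 ≤ P)
    (hP₁ : P ≤ 1) {S : Finset m} (hPS : RCLike.re P.trace = #S) {f : m → ℝ}
    (hf : ∃ e : Equiv.Perm m, f = hB.eigenvalues ∘ e) (hfS : ∀ i ∈ S, ∀ j ∉ S, f j ≤ f i) :
    RCLike.re (P * B).trace ≤ ∑ i ∈ S, f i := by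
  obtain ⟨e, rfl⟩ := hf
  obtain ⟨t, ht₀, ht₁, ht, hPB⟩ := hB.exists_re_trace_mul_eq_sum hP₀ hP₁
  rw [hPB, ← Equiv.sum_comp e]
  exact sum_mul_le_sum_of_forall_notMem_le (fun i => ht₀ _) (fun i => ht₁ _)
    (by rw [Equiv.sum_comp e, ht, hPS]) hfS

lemma IsHermitian.sum_le_re_trace_mul {B P : Matrix m m 𝕜} (hB : B.IsHermitian) (hP₀ : 0 ≤ P)
    (hP₁ : P ≤ 1) {S : Finset m} (hPS : RCLike.re P.trace = #S) {f : m → ℝ}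
    (hf : ∃ e : Equiv.Perm m, f = hB.eigenvalues ∘ e) (hfS : ∀ i ∈ S, ∀ j ∉ S, f i ≤ f j) :
    ∑ i ∈ S, f i ≤ RCLike.re (P * B).trace := by
  obtain ⟨e, rfl⟩ := hf
  obtain ⟨t, ht₀, ht₁, ht, hPB⟩ := hB.exists_re_trace_mul_eq_sum hP₀ hP₁
  rw [hPB, ← Equiv.sum_comp e]
  exact sum_le_sum_mul_of_forall_notMem_le (fun i => ht₀ _) (fun i => ht₁ _)
    (by rw [Equiv.sum_comp e, ht, hPS]) hfS

end Matrix

lemma traceDist_eq_sum_posPart {n : ℕ} {ρ σ : Matrix (Fin n) (Fin n) ℂ}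
    (hA : (ρ - σ).IsHermitian) (htr : ρ.trace = σ.trace) :
    traceDist ρ σ = ∑ i, (hA.eigenvalues i)⁺ := by
  have hsum : ∑ i, hA.eigenvalues i = 0 := by
    simpa [htr] using hA.sum_eigenvalues_comp ⟨1, rfl⟩
  rw [traceDist, sqrt_posSemidef_conjTranspose_mul_self, hA.trace_abs, Complex.re_sum]
  simp only [RCLike.re_to_complex.symm, RCLike.ofReal_re]
  rw [sum_abs_eq_two_mul_sum_posPart hsum]
  ring

/-- The quantum trace distance is bounded by the classical trace distance between the
ascending eigenvalue vector of ρ and the descending eigenvalue vector of σ. -/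
theorem stmt_0 {n : ℕ} (ρ σ : Matrix (Fin n) (Fin n) ℂ)
    (hρ : ρ.PosSemidef) (hσ : σ.PosSemidef)
    (hρt : ρ.trace = 1) (hσt : σ.trace = 1)
    (lam mu : Fin n → ℝ)
    (hlam_mono : Monotone lam) (hmu_anti : Antitone mu)
    (hlam : ∃ e : Equiv.Perm (Fin n), lam = hρ.1.eigenvalues ∘ e)
    (hmu : ∃ e : Equiv.Perm (Fin n), mu = hσ.1.eigenvalues ∘ e) :
    traceDist ρ σ ≤ (1/2) * ∑ i, |lam i - mu i| := by
  have hA : (ρ - σ).IsHermitian := hρ.1.sub hσ.1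
  set P := posProj (ρ - σ)
  obtain ⟨S, hS, hSk⟩ := Fin.exists_isUpperSet_card
    ((card_filter_le univ fun i => 0 < hA.eigenvalues i).trans_eq (card_fin n))
  have hPS : RCLike.re P.trace = #S := by rw [hA.trace_posProj, hSk]; rfl
  have hsum : ∑ i, (lam i - mu i) = 0 := by
    rw [sum_sub_distrib, hρ.1.sum_eigenvalues_comp hlam, hσ.1.sum_eigenvalues_comp hmu, hρt, hσt,
      sub_self]
  calc traceDist ρ σ = RCLike.re (P * (ρ - σ)).trace := by
        rw [traceDist_eq_sum_posPart hA (hρt.trans hσt.symm), hA.re_trace_posProj_mul_self]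
    _ = RCLike.re (P * ρ).trace - RCLike.re (P * σ).trace := by
        rw [mul_sub, trace_sub, map_sub]
    _ ≤ ∑ i ∈ S, lam i - ∑ i ∈ S, mu i := sub_le_sub
        (hρ.1.re_trace_mul_le_sum (posProj_nonneg _) (posProj_le_one _) hPS hlam
          fun i hi j hj => hS.apply_le_of_monotone hlam_mono hi hj)
        (hσ.1.sum_le_re_trace_mul (posProj_nonneg _) (posProj_le_one _) hPS hmu
          fun i hi j hj => hS.apply_le_of_antitone hmu_anti hi hj)
    _ ≤ ∑ i, (lam i - mu i)⁺ := by
        rw [← sum_sub_distrib]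
        exact (sum_le_sum fun i _ => le_posPart _).trans
          (sum_le_sum_of_subset_of_nonneg (subset_univ S) fun i _ _ => posPart_nonneg _)
    _ = (1/2) * ∑ i, |lam i - mu i| := by rw [sum_abs_eq_two_mul_sum_posPart hsum]; ring
end

section
/- Let |ψ⟩ = √r|00⟩ + √(1−r)|11⟩ be a two-qubit state with 0 ≤ r ≤ 1, let P⊥ = 𝟙 − |ψ⟩⟨ψ|, and let U_A, V_B range over unitaries acting only on the first and second qubit respectively. Then max over U_A, V_B of |⟨ψ| U_A† P⊥ V_B |ψ⟩| equals 2√(r(1−r)). -/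
/-!
With `a = √r`, `b = √(1 - r)`, expanding in the computational basis gives
`⟨ψ|U_A† P⊥ V_B|ψ⟩ = a²b² (ū₀₀ - ū₁₁)(v₀₀ - v₁₁) + ab (ū₁₀ v₀₁ + ū₀₁ v₁₀)`.
A `2 × 2` unitary has `|u₀₀| = |u₁₁| = c`, `|u₀₁| = |u₁₀| = d` with `c² + d² = 1`, so the modulus
is at most `2ab (2ab·ce + dg) ≤ 2ab (ce + dg) ≤ 2ab`, by `2ab ≤ a² + b² = 1` and Cauchy–Schwarz.
The bit flip `U = V = σₓ` attains `2ab`.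
-/

open Matrix Kronecker

namespace Matrix

variable {n 𝕜 : Type*} [Fintype n] [DecidableEq n] [RCLike 𝕜]

theorem sum_norm_sq_row_of_mem_unitaryGroup {U : Matrix n n 𝕜}
    (hU : U ∈ unitaryGroup n 𝕜) (i : n) : ∑ j, ‖U i j‖ ^ 2 = 1 := by
  have h := congrFun (congrFun (mem_unitaryGroup_iff.mp hU) i) i
  simp only [mul_apply, star_apply, ← starRingEnd_apply, RCLike.mul_conj, one_apply_eq] at h
  exact_mod_cast h

theorem sum_norm_sq_col_of_mem_unitaryGroup {U : Matrix n n 𝕜}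
    (hU : U ∈ unitaryGroup n 𝕜) (j : n) : ∑ i, ‖U i j‖ ^ 2 = 1 :=
  sum_norm_sq_row_of_mem_unitaryGroup (transpose_mem_unitaryGroup_iff.mpr hU) j

theorem norm_sq_add_norm_sq_of_mem_unitaryGroup_fin_two {U : Matrix (Fin 2) (Fin 2) 𝕜}
    (hU : U ∈ unitaryGroup (Fin 2) 𝕜) : ‖U 0 0‖ ^ 2 + ‖U 0 1‖ ^ 2 = 1 := by
  simpa [Fin.sum_univ_two] using sum_norm_sq_row_of_mem_unitaryGroup hU 0

theorem norm_apply_eq_of_mem_unitaryGroup_fin_two {U : Matrix (Fin 2) (Fin 2) 𝕜}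
    (hU : U ∈ unitaryGroup (Fin 2) 𝕜) : ‖U 1 1‖ = ‖U 0 0‖ ∧ ‖U 1 0‖ = ‖U 0 1‖ := by
  have row₀ := sum_norm_sq_row_of_mem_unitaryGroup hU 0
  have row₁ := sum_norm_sq_row_of_mem_unitaryGroup hU 1
  have col₀ := sum_norm_sq_col_of_mem_unitaryGroup hU 0
  simp only [Fin.sum_univ_two] at row₀ row₁ col₀
  constructor <;> rw [← sq_eq_sq₀ (norm_nonneg _) (norm_nonneg _)] <;> linarith

end Matrix

def pauliX : Matrix (Fin 2) (Fin 2) ℂ := !![0, 1; 1, 0]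

theorem pauliX_mem_unitaryGroup : pauliX ∈ unitaryGroup (Fin 2) ℂ := by
  rw [mem_unitaryGroup_iff]
  ext i j
  fin_cases i <;> fin_cases j <;> simp [pauliX, mul_apply, Fin.sum_univ_two]

/-- The two-qubit state `a|00⟩ + b|11⟩`. -/
def schmidtState (a b : ℝ) : Fin 2 × Fin 2 → ℂ :=
  fun p => if p = (0, 0) then (a : ℂ) else if p = (1, 1) then (b : ℂ) else 0

/-- `⟨ψ| (U ⊗ 𝟙)† (𝟙 - |ψ⟩⟨ψ|) (𝟙 ⊗ V) |ψ⟩`. -/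
def perpAmplitude (ψ : Fin 2 × Fin 2 → ℂ) (U V : Matrix (Fin 2) (Fin 2) ℂ) : ℂ :=
  star ψ ⬝ᵥ (((U ⊗ₖ (1 : Matrix (Fin 2) (Fin 2) ℂ))ᴴ * (1 - vecMulVec ψ (star ψ)) *
    ((1 : Matrix (Fin 2) (Fin 2) ℂ) ⊗ₖ V)) *ᵥ ψ)

open ComplexConjugate in
theorem perpAmplitude_schmidtState {a b : ℝ} (hab : a ^ 2 + b ^ 2 = 1)
    (U V : Matrix (Fin 2) (Fin 2) ℂ) :
    perpAmplitude (schmidtState a b) U V =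
      a ^ 2 * b ^ 2 * (conj (U 0 0) - conj (U 1 1)) * (V 0 0 - V 1 1)
        + a * b * (conj (U 1 0) * V 0 1 + conj (U 0 1) * V 1 0) := by
  have habC : (a : ℂ) ^ 2 + (b : ℂ) ^ 2 = 1 := by exact_mod_cast hab
  simp only [perpAmplitude, dotProduct, Pi.star_apply, schmidtState, Prod.ext_iff,
    RCLike.star_def, mulVec, mul_apply, conjTranspose_apply, kroneckerMap_apply, one_apply, mul_ite,
    mul_one, mul_zero, Matrix.sub_apply, vecMulVec_apply, ite_mul, zero_mul, Fintype.sum_prod_type,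
    Fin.sum_univ_two, and_true, zero_ne_one, and_false, ↓reduceIte, one_ne_zero, sub_zero, one_mul,
    Finset.sum_ite_irrel, add_zero, zero_sub, mul_neg, zero_add, Finset.sum_const_zero,
    Finset.sum_ite_eq', Finset.mem_univ, Complex.conj_ofReal, map_zero, neg_zero, sub_self, neg_mul]
  linear_combination (-((a : ℂ) ^ 2 * conj (U 0 0) * V 0 0 + (b : ℂ) ^ 2 * conj (U 1 1) * V 1 1))
    * habC

theorem norm_perpAmplitude_schmidtState_le {a b : ℝ} (ha : 0 ≤ a) (hb : 0 ≤ b)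
    (hab : a ^ 2 + b ^ 2 = 1) {U V : Matrix (Fin 2) (Fin 2) ℂ}
    (hU : U ∈ unitaryGroup (Fin 2) ℂ) (hV : V ∈ unitaryGroup (Fin 2) ℂ) :
    ‖perpAmplitude (schmidtState a b) U V‖ ≤ 2 * (a * b) := by
  obtain ⟨hU₁₁, hU₁₀⟩ := norm_apply_eq_of_mem_unitaryGroup_fin_two hU
  obtain ⟨hV₁₁, hV₁₀⟩ := norm_apply_eq_of_mem_unitaryGroup_fin_two hV
  have hU_unit := norm_sq_add_norm_sq_of_mem_unitaryGroup_fin_two hU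
  have hV_unit := norm_sq_add_norm_sq_of_mem_unitaryGroup_fin_two hV
  set c := ‖U 0 0‖
  set d := ‖U 0 1‖
  set e := ‖V 0 0‖
  set g := ‖V 0 1‖
  have h_triangle : ‖perpAmplitude (schmidtState a b) U V‖ ≤
      a ^ 2 * b ^ 2 * (c + c) * (e + e) + a * b * (d * g + d * g) := by
    rw [perpAmplitude_schmidtState hab]
    refine (norm_add_le _ _).trans (add_le_add ?_ ?_)
    · simp only [norm_mul, norm_pow, Complex.norm_real, Real.norm_of_nonneg ha,
        Real.norm_of_nonneg hb]
      gcongr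
      · exact (norm_sub_le _ _).trans (by simp only [Complex.norm_conj, hU₁₁, c, le_refl])
      · exact (norm_sub_le _ _).trans (by rw [hV₁₁])
    · simp only [norm_mul, Complex.norm_real, Real.norm_of_nonneg ha, Real.norm_of_nonneg hb]
      gcongr
      refine (norm_add_le _ _).trans ?_
      simp [hU₁₀, hV₁₀, d, g, mul_comm]
  have h_cs : c * e + d * g ≤ 1 := by nlinarith [sq_nonneg (c - e), sq_nonneg (d - g)]
  have h_amgm : 2 * (a * b) ≤ 1 := by nlinarith [sq_nonneg (a - b)]
  have hab_nonneg : 0 ≤ a * b := mul_nonneg ha hb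
  have hce_nonneg : 0 ≤ c * e := by positivity
  nlinarith [mul_nonneg hab_nonneg (sub_nonneg.mpr h_cs),
    mul_nonneg (mul_nonneg hab_nonneg hce_nonneg) (sub_nonneg.mpr h_amgm)]

theorem perpAmplitude_schmidtState_pauliX {a b : ℝ} (hab : a ^ 2 + b ^ 2 = 1) :
    perpAmplitude (schmidtState a b) pauliX pauliX = 2 * (a * b) := by
  rw [perpAmplitude_schmidtState hab]
  simp [pauliX, one_add_one_eq_two, mul_comm]

/-- For |ψ⟩ = √r|00⟩+√(1−r)|11⟩ and P⊥ = 𝟙−|ψ⟩⟨ψ|, the maximum over local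
unitaries U_A = U⊗𝟙, V_B = 𝟙⊗V of |⟨ψ|U_A† P⊥ V_B|ψ⟩| equals 2√(r(1−r)). -/
theorem stmt_5 (r : ℝ) (hr0 : 0 ≤ r) (hr1 : r ≤ 1)
    (ψ : Fin 2 × Fin 2 → ℂ)
    (hψ : ψ = fun p => if p = (0, 0) then (Real.sqrt r : ℂ)
                       else if p = (1, 1) then (Real.sqrt (1 - r) : ℂ) else 0)
    (P : Matrix (Fin 2 × Fin 2) (Fin 2 × Fin 2) ℂ)
    (hP : P = 1 - Matrix.vecMulVec ψ (star ψ)) :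
    IsGreatest { x : ℝ | ∃ U ∈ Matrix.unitaryGroup (Fin 2) ℂ,
        ∃ V ∈ Matrix.unitaryGroup (Fin 2) ℂ,
        x = ‖(star ψ ⬝ᵥ
          (((U ⊗ₖ (1 : Matrix (Fin 2) (Fin 2) ℂ))ᴴ * P *
            ((1 : Matrix (Fin 2) (Fin 2) ℂ) ⊗ₖ V)) *ᵥ ψ))‖ }
      (2 * Real.sqrt (r * (1 - r))) := by
  subst hψ hP
  have hab : √r ^ 2 + √(1 - r) ^ 2 = 1 := by
    rw [Real.sq_sqrt hr0, Real.sq_sqrt (by linarith)]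
    ring
  have h_coeff : 2 * √(r * (1 - r)) = 2 * (√r * √(1 - r)) := by rw [Real.sqrt_mul hr0]
  rw [h_coeff]
  refine ⟨⟨pauliX, pauliX_mem_unitaryGroup, pauliX, pauliX_mem_unitaryGroup, ?_⟩, ?_⟩
  · change _ = ‖perpAmplitude (schmidtState √r √(1 - r)) pauliX pauliX‖
    rw [perpAmplitude_schmidtState_pauliX hab]
    norm_cast
    rw [Real.norm_of_nonneg (by positivity)]
  · rintro x ⟨U, hU, V, hV, rfl⟩
    exact norm_perpAmplitude_schmidtState_le (Real.sqrt_nonneg _) (Real.sqrt_nonneg _) hab hU hV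
end

section
/- Let E(|ψ⟩) be the entanglement entropy −λ₀ log₂λ₀ − λ₁ log₂λ₁ and C(|ψ⟩) = 2√(λ₀λ₁) the concurrence of a two-qubit pure state with Schmidt coefficients λ₀, λ₁ = 1−λ₀. Then C(|ψ⟩) ≥ E(|ψ⟩), i.e. 2√(λ(1−λ)) ≥ −λ log₂λ − (1−λ)log₂(1−λ) for all λ ∈ [0,1]. -/
private lemma aux_log_le {t : ℝ} (ht : 1 ≤ t) :
    Real.log t ≤ Real.sqrt t - 1 / Real.sqrt t := by
  have hs1 : 1 ≤ Real.sqrt t := Real.one_le_sqrt.mpr ht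
  have hs0 : 0 < Real.sqrt t := by linarith
  have hy : 0 ≤ Real.log (Real.sqrt t) := Real.log_nonneg hs1
  have hsinh : Real.log (Real.sqrt t) ≤ Real.sinh (Real.log (Real.sqrt t)) := by
    rcases eq_or_lt_of_le hy with h | h
    · rw [← h]; simp
    · exact (Real.self_lt_sinh_iff.mpr h).le
  rw [Real.sinh_eq, Real.exp_log hs0, Real.exp_neg, Real.exp_log hs0] at hsinh
  have hlog : Real.log t = 2 * Real.log (Real.sqrt t) :=
    by rw [Real.log_sqrt (by linarith : (0:ℝ) ≤ t)]; ring
  rw [hlog, one_div]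
  linarith

private lemma aux_A {a : ℝ} (ha : 0 < a) (ha1 : a ≤ 1) :
    -a * Real.log a ≤ Real.sqrt a * (1 - a) := by
  have h := aux_log_le (t := a⁻¹) ((one_le_inv₀ ha).mpr ha1)
  rw [Real.log_inv, Real.sqrt_inv, one_div, inv_inv] at h
  have hs : 0 < Real.sqrt a := Real.sqrt_pos.mpr ha
  have h2 := mul_le_mul_of_nonneg_left h ha.le
  have key : a * ((Real.sqrt a)⁻¹ - Real.sqrt a) = Real.sqrt a * (1 - a) := by
    have hsq : Real.sqrt a * Real.sqrt a = a := Real.mul_self_sqrt ha.le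
    field_simp
    nlinarith [hsq]
  nlinarith [h2, key]

private lemma aux_taylor {x : ℝ} (hx : |x| ≤ 2/5) :
    |(x + x^2/2 + x^3/3 + x^4/4) + Real.log (1 - x)| ≤ 2/3 * x^4 := by
  have h1 : |x| < 1 := lt_of_le_of_lt hx (by norm_num)
  have h := Real.abs_log_sub_add_sum_range_le h1 4
  have hsum : (∑ i ∈ Finset.range 4, x ^ (i + 1) / (i + 1))
      = x + x^2/2 + x^3/3 + x^4/4 := by
    simp [Finset.sum_range_succ]
    norm_num
  rw [hsum] at h
  refine h.trans ?_
  have h4 : |x|^4 = x^4 := by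
    rw [← abs_pow, abs_of_nonneg (by positivity)]
  have hnum : |x|^5 ≤ 2/5 * x^4 := by
    have : |x|^5 = |x| * |x|^4 := by ring
    rw [this, h4]
    exact mul_le_mul_of_nonneg_right hx (by positivity)
  have hden : (3:ℝ)/5 ≤ 1 - |x| := by linarith
  calc |x|^5 / (1 - |x|) ≤ (2/5 * x^4) / (3/5) :=
        div_le_div₀ (by positivity) hnum (by norm_num) hden
    _ = 2/3 * x^4 := by ring

set_option maxHeartbeats 1600000 in
private lemma aux_mid {z : ℝ} (hz2 : z^2 ≤ 16/100) :
    -((1 - z)/2) * Real.log ((1 - z)/2) - ((1 + z)/2) * Real.log ((1 + z)/2) ≤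
      2 * Real.log 2 * Real.sqrt (((1 - z)/2) * ((1 + z)/2)) := by
  have hlog2 : (0:ℝ) < Real.log 2 := Real.log_pos (by norm_num)
  have hzabs : |z| ≤ 2/5 := abs_le.mpr ⟨by nlinarith [hz2], by nlinarith [hz2]⟩
  obtain ⟨hza, hzb⟩ := abs_le.mp hzabs
  have hz1 : 0 < 1 - z := by linarith
  have hz1' : 0 < 1 + z := by linarith
  have hz4 : z^4 ≤ 16/100 * z^2 := by nlinarith [hz2, sq_nonneg z, sq_nonneg (z^2)]
  have T1 := aux_taylor hzabs
  have T2 := aux_taylor (x := -z) (by rwa [abs_neg])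
  have hL1 : -(z + z^2/2 + z^3/3 + z^4/4) - 2/3*z^4 ≤ Real.log (1 - z) := by
    have := (abs_le.mp T1).1
    linarith
  have hL2 : -(-z + z^2/2 - z^3/3 + z^4/4) - 2/3*z^4 ≤ Real.log (1 + z) := by
    have h := (abs_le.mp T2).1
    have e : (1 : ℝ) - (-z) = 1 + z := by ring
    rw [e] at h
    nlinarith [h]
  have e1 : Real.log ((1 - z)/2) = Real.log (1 - z) - Real.log 2 :=
    Real.log_div (by linarith) (by norm_num)
  have e2 : Real.log ((1 + z)/2) = Real.log (1 + z) - Real.log 2 :=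
    Real.log_div (by linarith) (by norm_num)
  have hm1 := mul_le_mul_of_nonneg_left hL1 (by linarith : (0:ℝ) ≤ (1 - z)/2)
  have hm2 := mul_le_mul_of_nonneg_left hL2 (by linarith : (0:ℝ) ≤ (1 + z)/2)
  have hstep : -((1 - z)/2) * (Real.log (1 - z) - Real.log 2)
      - ((1 + z)/2) * (Real.log (1 + z) - Real.log 2)
      ≤ Real.log 2 - z^2/2 + (7/12)*z^4 := by nlinarith [hm1, hm2]
  set w := Real.sqrt (((1 - z)/2) * ((1 + z)/2)) with hww
  have hwnn : 0 ≤ w := Real.sqrt_nonneg _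
  have hw2 : w^2 = ((1 - z)/2) * ((1 + z)/2) := Real.sq_sqrt (by positivity)
  have hw2' : 4 * w^2 = 1 - z^2 := by rw [hw2]; ring
  have haux : 0 ≤ z^2 * z^2 * (1 - z^2) * (z^2 + 3) := by
    have h1 : (0:ℝ) ≤ 1 - z^2 := by linarith
    have h2 : (0:ℝ) ≤ z^2 + 3 := by positivity
    positivity
  have hrpos : 0 ≤ 1 - (z^2 + z^4)/2 := by linarith
  have hid : (2*w)^2 - (1 - (z^2 + z^4)/2)^2 = z^2 * z^2 * (1 - z^2) * (z^2 + 3)/4 := by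
    have h4w : (2*w)^2 = 4 * w^2 := by ring
    rw [h4w, hw2']
    ring
  have hr : (1 - (z^2 + z^4)/2)^2 ≤ (2*w)^2 := by linarith [haux, hid]
  have hw : 1 - (z^2 + z^4)/2 ≤ 2 * w := by
    calc 1 - (z^2 + z^4)/2 = Real.sqrt ((1 - (z^2 + z^4)/2)^2) := (Real.sqrt_sq hrpos).symm
      _ ≤ Real.sqrt ((2*w)^2) := Real.sqrt_le_sqrt hr
      _ = 2*w := Real.sqrt_sq (by linarith)
  have hwl := mul_le_mul_of_nonneg_left hw hlog2.le
  have c1 : Real.log 2 * z^2 ≤ 0.6931471808 * z^2 :=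
    mul_le_mul_of_nonneg_right Real.log_two_lt_d9.le (sq_nonneg z)
  have c2 : Real.log 2 * z^4 ≤ 0.6931471808 * z^4 :=
    mul_le_mul_of_nonneg_right Real.log_two_lt_d9.le (by positivity)
  rw [e1, e2]
  nlinarith [hstep, hwl, c1, c2, hz4, sq_nonneg z]

private lemma aux_key {lam : ℝ} (h0 : 0 < lam) (h1 : lam < 1) :
    -lam * Real.log lam - (1 - lam) * Real.log (1 - lam) ≤
      2 * Real.log 2 * Real.sqrt (lam * (1 - lam)) := by
  have hlog2 : (0:ℝ) < Real.log 2 := Real.log_pos (by norm_num)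
  have h1' : 0 < 1 - lam := by linarith
  by_cases hp : lam * (1 - lam) ≤ 21/100
  · set a := Real.sqrt lam with haa
    set b := Real.sqrt (1 - lam) with hbb
    have ha2 : a^2 = lam := Real.sq_sqrt h0.le
    have hb2 : b^2 = 1 - lam := Real.sq_sqrt h1'.le
    have ha : 0 < a := Real.sqrt_pos.mpr h0
    have hb : 0 < b := Real.sqrt_pos.mpr h1'
    have hab : Real.sqrt (lam * (1 - lam)) = a * b := Real.sqrt_mul h0.le _
    have hA1 : -lam * Real.log lam ≤ a * (1 - lam) := aux_A h0 h1.le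
    have hA2 : -(1 - lam) * Real.log (1 - lam) ≤ b * lam := by
      have h := aux_A h1' (by linarith)
      rw [← hbb] at h
      calc -(1 - lam) * Real.log (1 - lam) ≤ b * (1 - (1 - lam)) := h
        _ = b * lam := by ring
    have hab2 : (a*b)^2 = lam * (1 - lam) := by rw [mul_pow, ha2, hb2]
    have habnn : 0 ≤ a * b := by positivity
    have hab_le : a * b ≤ 4583/10000 := by nlinarith [hab2, habnn, hp]
    have hsum : a + b ≤ 2 * Real.log 2 := by
      nlinarith [Real.log_two_gt_d9, ha.le, hb.le, ha2, hb2, hab_le]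
    have hfac : a * (1 - lam) + b * lam = (a*b) * (a + b) := by
      linear_combination (-b) * ha2 + (-a) * hb2
    have hmul := mul_le_mul_of_nonneg_left hsum habnn
    rw [hab]
    linarith [hA1, hA2, hfac, hmul]
  · push_neg at hp
    have hz2 : (1 - 2*lam)^2 ≤ 16/100 := by nlinarith [hp]
    have hmid := aux_mid hz2
    have e : (1 - (1 - 2*lam))/2 = lam := by ring
    have e' : (1 + (1 - 2*lam))/2 = 1 - lam := by ring
    rw [e, e'] at hmid
    exact hmid

/-- Concurrence dominates entanglement entropy:
2√(λ(1−λ)) ≥ −λ log₂ λ − (1−λ) log₂ (1−λ) for all λ ∈ [0,1]. -/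
theorem stmt_18 (lam : ℝ) (h0 : 0 ≤ lam) (h1 : lam ≤ 1) :
    -lam * Real.logb 2 lam - (1 - lam) * Real.logb 2 (1 - lam) ≤
      2 * Real.sqrt (lam * (1 - lam)) := by
  have hlog2 : (0:ℝ) < Real.log 2 := Real.log_pos (by norm_num)
  rcases eq_or_lt_of_le h0 with h0' | h0'
  · rw [← h0']; norm_num
  rcases eq_or_lt_of_le h1 with h1' | h1'
  · rw [h1']; norm_num
  have key := aux_key h0' h1'
  rw [Real.logb, Real.logb,
    show -lam * (Real.log lam / Real.log 2) - (1 - lam) * (Real.log (1 - lam) / Real.log 2)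
      = (-lam * Real.log lam - (1 - lam) * Real.log (1 - lam)) / Real.log 2 from by ring,
    div_le_iff₀ hlog2]
  nlinarith [key]
end
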